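/- Let H be a complex Hilbert space, A a bounded self-adjoint operator on H, and p_ε, q_ε bounded nonnegative self-adjoint operators on H for ε ∈ (0,1]. Suppose u_ε, v_ε : [0,T] → H are C¹ solutions of i u_ε' + A u_ε + p_ε u_ε = 0 and i v_ε' + A v_ε + q_ε v_ε = 0 with initial data u_{0,ε}, v_{0,ε}. Assume: (a) ‖u_{0,ε} - v_{0,ε}‖ ≤ C_k ε^k for all k; (b) ‖p_ε - q_ε‖_{op} ≤ C_k ε^k for all k; (c) sup_{t∈[0,T]} ‖v_ε(t)‖ ≤ C ε^{-N} for some N. Then for every k ∈ ℕ, sup_{t∈[0,T]} ‖u_ε(t) - v_ε(t)‖ ≤ C_k' ε^k. -/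

import Mathlib

/-!
Energy method. The difference `w = u_ε - v_ε` solves `i w' + (A + p_ε) w + (p_ε - q_ε) v_ε = 0`.
Since `A + p_ε` is self-adjoint, `Re ⟪w, w'⟫ = -Im ⟪w, (p_ε - q_ε) v_ε⟫`, so the norm of `w` grows
at rate at most `‖p_ε - q_ε‖ · sup ‖v_ε‖ = O(ε^(k+N) ε^(-N))`, and `‖w t‖ ≤ ‖w 0‖ + O(ε^k) t`.
-/

open Set Complex

theorem norm_le_norm_zero_add_mul_of_inner_deriv_le {F : Type*} [NormedAddCommGroup F]
    [InnerProductSpace ℝ F] {T δ : ℝ} (hδ : 0 ≤ δ) {w w' : ℝ → F}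
    (hw : ∀ s ∈ Icc 0 T, HasDerivAt w (w' s) s)
    (hb : ∀ s ∈ Icc 0 T, inner ℝ (w s) (w' s) ≤ δ * ‖w s‖)
    {t : ℝ} (ht : t ∈ Icc 0 T) : ‖w t‖ ≤ ‖w 0‖ + δ * t := by
  refine le_of_forall_pos_le_add fun η hη => ?_
  -- `‖w‖` need not be differentiable where `w` vanishes; its regularization `ψ` is.
  set ψ : ℝ → ℝ := fun s => √(‖w s‖ ^ 2 + η ^ 2)
  have hpos : ∀ s, 0 < ‖w s‖ ^ 2 + η ^ 2 := fun s => by positivity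
  have hnorm_le : ∀ s, ‖w s‖ ≤ ψ s := fun s =>
    Real.le_sqrt_of_sq_le (le_add_of_nonneg_right (sq_nonneg η))
  have hderiv : ∀ s ∈ Icc 0 T,
      HasDerivAt ψ (2 * inner ℝ (w s) (w' s) / (2 * ψ s)) s := fun s hs =>
    ((hw s hs).norm_sq.add_const _).sqrt (hpos s).ne'
  have hderiv_le : ∀ s ∈ Icc 0 T, 2 * inner ℝ (w s) (w' s) / (2 * ψ s) ≤ δ := by
    intro s hs
    have hψs : 0 < ψ s := Real.sqrt_pos.2 (hpos s)
    rw [div_le_iff₀ (by positivity)]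
    nlinarith [hb s hs, mul_le_mul_of_nonneg_left (hnorm_le s) hδ]
  have h0 : (0 : ℝ) ∈ Icc 0 T := ⟨le_rfl, ht.1.trans ht.2⟩
  have hgrowth : ψ t - ψ 0 ≤ δ * (t - 0) := by
    refine (convex_Icc 0 T).image_sub_le_mul_sub_of_deriv_le
      (fun s hs => (hderiv s hs).continuousAt.continuousWithinAt)
      (fun s hs => ?_) (fun s hs => ?_) 0 h0 t ht ht.1
    · rw [interior_Icc] at hs
      exact (hderiv s (Ioo_subset_Icc_self hs)).differentiableAt.differentiableWithinAt
    · rw [interior_Icc] at hs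
      exact (hderiv s (Ioo_subset_Icc_self hs)).deriv ▸ hderiv_le s (Ioo_subset_Icc_self hs)
  have hψ0 : ψ 0 ≤ ‖w 0‖ + η :=
    Real.sqrt_le_iff.2 ⟨by positivity, by nlinarith [norm_nonneg (w 0)]⟩
  linarith [hnorm_le t]

theorem re_inner_le_norm_mul_norm_of_I_smul_add_eq_zero {H : Type*} [NormedAddCommGroup H]
    [InnerProductSpace ℂ H] [CompleteSpace H] {B : H →L[ℂ] H} (hB : IsSelfAdjoint B) {x x' y : H}
    (h : I • x' + B x + y = 0) : (inner ℂ x x').re ≤ ‖x‖ * ‖y‖ := by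
  have hx' : x' = I • (B x + y) :=
    calc x' = -(I • I • x') := by rw [smul_smul, I_mul_I, neg_one_smul, neg_neg]
      _ = I • (B x + y) := by
        rw [add_assoc] at h
        rw [eq_neg_of_add_eq_zero_left h, smul_neg, neg_neg]
  have hBx : (inner ℂ x (B x)).im = 0 := hB.isSymmetric.im_inner_self_apply x
  have hre : (inner ℂ x x').re = -(inner ℂ x y).im := by simp [hx', hBx]
  rw [hre]
  exact (neg_le_abs _).trans ((abs_im_le_norm _).trans (norm_inner_le_norm x y))

theorem norm_le_norm_zero_add_mul_of_I_smul_deriv_add_eq_zero {H : Type*} [NormedAddCommGroup H]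
    [InnerProductSpace ℂ H] [CompleteSpace H] {B : H →L[ℂ] H} (hB : IsSelfAdjoint B) {T δ : ℝ}
    {w w' g : ℝ → H} (hw : ∀ s ∈ Icc 0 T, HasDerivAt w (w' s) s)
    (heq : ∀ s ∈ Icc 0 T, I • w' s + B (w s) + g s = 0)
    (hg : ∀ s ∈ Icc 0 T, ‖g s‖ ≤ δ) {t : ℝ} (ht : t ∈ Icc 0 T) :
    ‖w t‖ ≤ ‖w 0‖ + δ * t := by
  let : InnerProductSpace ℝ H := InnerProductSpace.complexToReal
  refine norm_le_norm_zero_add_mul_of_inner_deriv_le ((norm_nonneg _).trans (hg t ht)) hw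
    (fun s hs => ?_) ht
  calc inner ℝ (w s) (w' s) = (inner ℂ (w s) (w' s)).re := rfl
    _ ≤ ‖w s‖ * ‖g s‖ := re_inner_le_norm_mul_norm_of_I_smul_add_eq_zero hB (heq s hs)
    _ ≤ δ * ‖w s‖ := by rw [mul_comm]; gcongr; exact hg s hs

theorem stmt15_general {H : Type*} [NormedAddCommGroup H] [InnerProductSpace ℂ H]
    [CompleteSpace H] (T : ℝ)
    (A : H →L[ℂ] H) (hA : IsSelfAdjoint A)
    (p q : ℝ → H →L[ℂ] H)
    (hpsa : ∀ ε ∈ Set.Ioc (0 : ℝ) 1, IsSelfAdjoint (p ε))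
    (u v u' v' : ℝ → ℝ → H)
    (hu : ∀ ε ∈ Set.Ioc (0 : ℝ) 1, ∀ t ∈ Set.Icc (0 : ℝ) T,
      HasDerivAt (u ε) (u' ε t) t ∧
      Complex.I • u' ε t + A (u ε t) + (p ε) (u ε t) = 0)
    (hv : ∀ ε ∈ Set.Ioc (0 : ℝ) 1, ∀ t ∈ Set.Icc (0 : ℝ) T,
      HasDerivAt (v ε) (v' ε t) t ∧
      Complex.I • v' ε t + A (v ε t) + (q ε) (v ε t) = 0)
    (hdata : ∀ k : ℕ, ∃ C : ℝ, ∀ ε ∈ Set.Ioc (0 : ℝ) 1,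
      ‖u ε 0 - v ε 0‖ ≤ C * ε ^ k)
    (hpot : ∀ k : ℕ, ∃ C : ℝ, ∀ ε ∈ Set.Ioc (0 : ℝ) 1,
      ‖p ε - q ε‖ ≤ C * ε ^ k)
    (hmod : ∃ N : ℕ, ∃ C : ℝ, ∀ ε ∈ Set.Ioc (0 : ℝ) 1, ∀ t ∈ Set.Icc (0 : ℝ) T,
      ‖v ε t‖ ≤ C * ε ^ (-(N : ℤ))) :
    ∀ k : ℕ, ∃ C : ℝ, ∀ ε ∈ Set.Ioc (0 : ℝ) 1, ∀ t ∈ Set.Icc (0 : ℝ) T,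
      ‖u ε t - v ε t‖ ≤ C * ε ^ k := by
  obtain ⟨N, C3, hC3⟩ := hmod
  intro k
  obtain ⟨C1, hC1⟩ := hdata k
  obtain ⟨C2, hC2⟩ := hpot (k + N)
  refine ⟨C1 + C2 * C3 * T, fun ε hε t ht => ?_⟩
  have hsource : ∀ s ∈ Icc 0 T, ‖(p ε - q ε) (v ε s)‖ ≤ C2 * C3 * ε ^ k := fun s hs =>
    calc ‖(p ε - q ε) (v ε s)‖ ≤ ‖p ε - q ε‖ * ‖v ε s‖ := (p ε - q ε).le_opNorm _
      _ ≤ C2 * ε ^ (k + N) * (C3 * ε ^ (-(N : ℤ))) :=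
        mul_le_mul (hC2 ε hε) (hC3 ε hε s hs) (norm_nonneg _) ((norm_nonneg _).trans (hC2 ε hε))
      _ = C2 * C3 * ε ^ k := by
        rw [← zpow_natCast, ← zpow_natCast, mul_mul_mul_comm, ← zpow_add₀ hε.1.ne']
        push_cast
        ring_nf
  have henergy : ‖u ε t - v ε t‖ ≤ ‖u ε 0 - v ε 0‖ + C2 * C3 * ε ^ k * t := by
    refine norm_le_norm_zero_add_mul_of_I_smul_deriv_add_eq_zero (hA.add (hpsa ε hε))
      (fun s hs => (hu ε hε s hs).1.sub (hv ε hε s hs).1) (fun s hs => ?_) hsource ht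
    simp only [Pi.sub_apply, smul_sub, map_sub, add_apply, sub_apply]
    linear_combination (norm := module) (hu ε hε s hs).2 - (hv ε hε s hs).2
  have hrate : 0 ≤ C2 * C3 * ε ^ k := (norm_nonneg _).trans (hsource t ht)
  calc ‖u ε t - v ε t‖ ≤ C1 * ε ^ k + C2 * C3 * ε ^ k * T :=
        henergy.trans (add_le_add (hC1 ε hε) (mul_le_mul_of_nonneg_left ht.2 hrate))
    _ = (C1 + C2 * C3 * T) * ε ^ k := by ring

/-- abstract uniqueness of very weak solutions. -/
theorem stmt15 {H : Type*} [NormedAddCommGroup H] [InnerProductSpace ℂ H]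
    [CompleteSpace H] (T : ℝ) (hT : 0 < T)
    (A : H →L[ℂ] H) (hA : IsSelfAdjoint A)
    (p q : ℝ → H →L[ℂ] H)
    (hpsa : ∀ ε ∈ Set.Ioc (0 : ℝ) 1, IsSelfAdjoint (p ε))
    (hqsa : ∀ ε ∈ Set.Ioc (0 : ℝ) 1, IsSelfAdjoint (q ε))
    (hpnn : ∀ ε ∈ Set.Ioc (0 : ℝ) 1, ∀ x : H, 0 ≤ (inner ℂ ((p ε) x) x : ℂ).re)
    (hqnn : ∀ ε ∈ Set.Ioc (0 : ℝ) 1, ∀ x : H, 0 ≤ (inner ℂ ((q ε) x) x : ℂ).re)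
    (u v u' v' : ℝ → ℝ → H)
    (hu : ∀ ε ∈ Set.Ioc (0 : ℝ) 1, ∀ t ∈ Set.Icc (0 : ℝ) T,
      HasDerivAt (u ε) (u' ε t) t ∧
      Complex.I • u' ε t + A (u ε t) + (p ε) (u ε t) = 0)
    (hv : ∀ ε ∈ Set.Ioc (0 : ℝ) 1, ∀ t ∈ Set.Icc (0 : ℝ) T,
      HasDerivAt (v ε) (v' ε t) t ∧
      Complex.I • v' ε t + A (v ε t) + (q ε) (v ε t) = 0)
    (hucont : ∀ ε ∈ Set.Ioc (0 : ℝ) 1, ContinuousOn (u' ε) (Set.Icc (0 : ℝ) T))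
    (hvcont : ∀ ε ∈ Set.Ioc (0 : ℝ) 1, ContinuousOn (v' ε) (Set.Icc (0 : ℝ) T))
    (hdata : ∀ k : ℕ, ∃ C : ℝ, ∀ ε ∈ Set.Ioc (0 : ℝ) 1,
      ‖u ε 0 - v ε 0‖ ≤ C * ε ^ k)
    (hpot : ∀ k : ℕ, ∃ C : ℝ, ∀ ε ∈ Set.Ioc (0 : ℝ) 1,
      ‖p ε - q ε‖ ≤ C * ε ^ k)
    (hmod : ∃ N : ℕ, ∃ C : ℝ, ∀ ε ∈ Set.Ioc (0 : ℝ) 1, ∀ t ∈ Set.Icc (0 : ℝ) T,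
      ‖v ε t‖ ≤ C * ε ^ (-(N : ℤ))) :
    ∀ k : ℕ, ∃ C : ℝ, ∀ ε ∈ Set.Ioc (0 : ℝ) 1, ∀ t ∈ Set.Icc (0 : ℝ) T,
      ‖u ε t - v ε t‖ ≤ C * ε ^ k :=
  stmt15_general T A hA p q hpsa u v u' v' hu hv hdata hpot hmod
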